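/- arXiv:0705.0518 — 5 statements merged into one kernel-verified Lean document; each statement's English description precedes it below -/
import Mathlib

section
/- The matrices A, A*, A^ε satisfy the cyclic commutation relations: AA* − A*A = 2iA^ε, A*A^ε − A^εA* = 2iA, and A^εA − AA^ε = 2iA*. -/
noncomputable section

open Matrix Finset

/-- Vertex set of the hypercube `Q_D`: binary strings of length `D`. -/
abbrev Vtx (D : ℕ) := Fin D → Bool

/-- Hamming weight of a vertex, i.e. its distance to the fixed vertex `x = (0,...,0)`. -/
def wt {D : ℕ} (y : Vtx D) : ℕ := (Finset.univ.filter fun k => y k = true).card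

/-- The adjacency matrix of the hypercube `Q_D`: `A_{yz} = 1` iff `y,z` differ in exactly
one coordinate. -/
def adjMat (D : ℕ) : Matrix (Vtx D) (Vtx D) ℂ :=
  fun y z => if (Finset.univ.filter fun k => y k ≠ z k).card = 1 then 1 else 0

/-- The dual adjacency matrix of `Q_D` with respect to `x = (0,...,0)`: the diagonal
matrix with `(y,y)`-entry `D - 2·wt(y)`. -/
def dualAdjMat (D : ℕ) : Matrix (Vtx D) (Vtx D) ℂ :=
  Matrix.diagonal fun y => (D : ℂ) - 2 * (wt y : ℂ)

/-- The imaginary adjacency matrix `Aᵉ = -i(AA* - A*A)/2`. -/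
def imagAdjMat (D : ℕ) : Matrix (Vtx D) (Vtx D) ℂ :=
  (-Complex.I / 2) • (adjMat D * dualAdjMat D - dualAdjMat D * adjMat D)

/-- The 2×2 matrix `P₁` with entries `(P₁)₀₀ = 1`, `(P₁)₀₁ = 1`, `(P₁)₁₀ = -i`,
`(P₁)₁₁ = i`. -/
def P1 : Bool → Bool → ℂ
  | false, false => 1
  | false, true  => 1
  | true,  false => -Complex.I
  | true,  true  => Complex.I

/-- The D-fold Kronecker power `P = P₁^{⊗D}`, i.e. `P_{yz} = ∏_k (P₁)_{y_k z_k}`. -/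
def Pmat (D : ℕ) : Matrix (Vtx D) (Vtx D) ℂ :=
  fun y z => ∏ k : Fin D, P1 (y k) (z k)

/-- The eigenvalues `θ_j = D - 2j`. -/
def theta (D j : ℕ) : ℂ := (D : ℂ) - 2 * (j : ℂ)

/-- The `i`-th primitive idempotent `E_i = ∏_{0 ≤ j ≤ D, j ≠ i} (A - θ_j I)/(θ_i - θ_j)`. -/
def Emat (D i : ℕ) : Matrix (Vtx D) (Vtx D) ℂ :=
  Polynomial.aeval (adjMat D)
    (∏ j ∈ (Finset.range (D + 1)).erase i,
      Polynomial.C ((theta D i - theta D j)⁻¹) * (Polynomial.X - Polynomial.C (theta D j)))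

/-- The `i`-th dual idempotent `E*_i`: diagonal with `(y,y)`-entry `1` if `wt(y) = i`. -/
def EstarMat (D i : ℕ) : Matrix (Vtx D) (Vtx D) ℂ :=
  Matrix.diagonal fun y => if wt y = i then 1 else 0

/-- The `i`-th imaginary idempotent `Eᵉ_i = P⁻¹ E_i P`. -/
def EepsMat (D i : ℕ) : Matrix (Vtx D) (Vtx D) ℂ :=
  (Pmat D)⁻¹ * Emat D i * Pmat D

/-- `W` is a `T`-module: a subspace of `ℂ^X` invariant under `A` and `A*`. -/
def IsTMod (D : ℕ) (W : Submodule ℂ (Vtx D → ℂ)) : Prop :=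
  (∀ w ∈ W, (adjMat D).mulVec w ∈ W) ∧ (∀ w ∈ W, (dualAdjMat D).mulVec w ∈ W)

/-- `W` is an irreducible `T`-module. -/
def IsIrredTMod (D : ℕ) (W : Submodule ℂ (Vtx D → ℂ)) : Prop :=
  IsTMod D W ∧ W ≠ ⊥ ∧
    ∀ U : Submodule ℂ (Vtx D → ℂ), IsTMod D U → U ≤ W → U = ⊥ ∨ U = W

/-- The Hermitian inner product `⟨u,v⟩ = uᵗ · conj v` (linear in the first argument). -/
def inp {D : ℕ} (u v : Vtx D → ℂ) : ℂ := ∑ y, u y * (starRingEnd ℂ) (v y)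

/-!
Write `X_k` for the permutation matrix flipping coordinate `k` and `Z_k` for the diagonal matrix
with entries `(-1)^{y_k}`; then `A = ∑ X_k` and `A* = ∑ Z_k`. These are Pauli matrices acting on
the `k`-th factor of `Q_D = K₂^D`: `X_k² = Z_k² = 1`, `X_k` and `Z_k` anticommute, and matrices
attached to different coordinates commute. Hence `AA* - A*A = 2 ∑ X_k Z_k`, i.e.
`Aᵉ = -i ∑ X_k Z_k`, and the other two relations reduce coordinatewise to
`Z(XZ) - (XZ)Z = -2X` and `(XZ)X - X(XZ) = -2Z`.
-/

section AnticommutingFamilies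

variable {ι R : Type*} [Fintype ι] [Ring R]

theorem commutator_sum_sum_of_pairwise_commute (P Q : ι → R)
    (h : Pairwise fun j k => Commute (P j) (Q k)) :
    (∑ j, P j) * (∑ k, Q k) - (∑ k, Q k) * (∑ j, P j) = ∑ k, (P k * Q k - Q k * P k) := by
  rw [Finset.sum_mul_sum, Finset.sum_mul_sum, Finset.sum_comm (s := univ),
    ← Finset.sum_sub_distrib]
  refine Finset.sum_congr rfl fun j _ => ?_
  rw [← Finset.sum_sub_distrib]
  exact Finset.sum_eq_single j (fun k _ hkj => sub_eq_zero.mpr (h hkj).eq) (by simp)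

theorem commutator_sum_sum_of_anticommute (X Z : ι → R)
    (hXZ : Pairwise fun j k => Commute (X j) (Z k)) (hanti : ∀ k, Z k * X k = -(X k * Z k)) :
    (∑ k, X k) * (∑ k, Z k) - (∑ k, Z k) * (∑ k, X k) = 2 • ∑ k, X k * Z k := by
  rw [commutator_sum_sum_of_pairwise_commute X Z hXZ, Finset.smul_sum]
  refine Finset.sum_congr rfl fun k _ => ?_
  rw [hanti, sub_neg_eq_add, two_nsmul]

theorem commutator_sum_sum_mul_of_anticommute (X Z : ι → R)
    (hZZ : Pairwise fun j k => Commute (Z j) (Z k))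
    (hXZ : Pairwise fun j k => Commute (X j) (Z k))
    (hZ : ∀ k, Z k * Z k = 1) (hanti : ∀ k, Z k * X k = -(X k * Z k)) :
    (∑ k, Z k) * (∑ k, X k * Z k) - (∑ k, X k * Z k) * (∑ k, Z k) = -(2 • ∑ k, X k) := by
  rw [commutator_sum_sum_of_pairwise_commute Z (fun k => X k * Z k)
      (fun j k hjk => (hXZ hjk.symm).symm.mul_right (hZZ hjk)),
    Finset.smul_sum, ← Finset.sum_neg_distrib]
  refine Finset.sum_congr rfl fun k _ => ?_
  rw [← mul_assoc, hanti, neg_mul, mul_assoc, hZ]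
  noncomm_ring

theorem commutator_sum_mul_sum_of_anticommute (X Z : ι → R)
    (hXX : Pairwise fun j k => Commute (X j) (X k))
    (hXZ : Pairwise fun j k => Commute (X j) (Z k))
    (hX : ∀ k, X k * X k = 1) (hanti : ∀ k, Z k * X k = -(X k * Z k)) :
    (∑ k, X k * Z k) * (∑ k, X k) - (∑ k, X k) * (∑ k, X k * Z k) = -(2 • ∑ k, Z k) := by
  rw [commutator_sum_sum_of_pairwise_commute (fun k => X k * Z k) X
      (fun j k hjk => (hXX hjk).mul_left (hXZ hjk.symm).symm),
    Finset.smul_sum, ← Finset.sum_neg_distrib]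
  refine Finset.sum_congr rfl fun k _ => ?_
  rw [mul_assoc, hanti, mul_neg, ← mul_assoc, hX]
  noncomm_ring

end AnticommutingFamilies

namespace Hypercube

variable {D : ℕ}

def flipCoord (k : Fin D) : Equiv.Perm (Vtx D) :=
  Function.Involutive.toPerm (fun y => Function.update y k (!y k)) fun y => by simp

theorem flipCoord_apply (k : Fin D) (y : Vtx D) :
    flipCoord k y = Function.update y k (!y k) :=
  rfl

theorem flipCoord_mul_self (k : Fin D) : flipCoord k * flipCoord k = 1 :=
  Equiv.ext fun y => by simp [flipCoord_apply]

theorem commute_flipCoord (j k : Fin D) : Commute (flipCoord j) (flipCoord k) := by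
  rcases eq_or_ne j k with rfl | hjk
  · rfl
  · exact Equiv.ext fun y => by
      simp [flipCoord_apply, Function.update_comm hjk, Function.update_of_ne hjk,
        Function.update_of_ne hjk.symm]

theorem flipCoord_eq_iff (k : Fin D) (y z : Vtx D) :
    flipCoord k y = z ↔ univ.filter (fun m => y m ≠ z m) = {k} := by
  simp only [flipCoord_apply, Function.update_eq_iff, Finset.eq_singleton_iff_unique_mem,
    mem_filter, mem_univ, true_and, Bool.not_eq]
  exact and_congr_right' (forall_congr' fun m => not_imp_comm)

def sign (k : Fin D) (y : Vtx D) : ℂ := if y k then -1 else 1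

theorem sign_flipCoord_self (k : Fin D) (y : Vtx D) : sign k (flipCoord k y) = -sign k y := by
  cases h : y k <;> simp [sign, flipCoord_apply, h]

theorem sign_flipCoord_of_ne {j k : Fin D} (h : j ≠ k) (y : Vtx D) :
    sign k (flipCoord j y) = sign k y := by
  simp [sign, flipCoord_apply, Function.update_of_ne h.symm]

theorem sum_sign (y : Vtx D) : ∑ k, sign k y = D - 2 * wt y := by
  have h : ∀ k, sign k y = 1 - 2 * if y k = true then 1 else 0 := fun k => by
    unfold sign; split_ifs <;> norm_num
  simp_rw [h, Finset.sum_sub_distrib, ← Finset.mul_sum, Finset.sum_boole, wt]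
  simp

def flipMat (k : Fin D) : Matrix (Vtx D) (Vtx D) ℂ := (flipCoord k).permMatrix ℂ

def signMat (k : Fin D) : Matrix (Vtx D) (Vtx D) ℂ := diagonal (sign k)

theorem flipMat_mul_self (k : Fin D) : flipMat k * flipMat k = 1 := by
  rw [flipMat, ← permMatrix_mul, flipCoord_mul_self, permMatrix_one]

theorem commute_flipMat (j k : Fin D) : Commute (flipMat j) (flipMat k) := by
  rw [Commute, SemiconjBy, flipMat, flipMat, ← permMatrix_mul, ← permMatrix_mul,
    (commute_flipCoord j k).eq]

theorem signMat_mul_self (k : Fin D) : signMat k * signMat k = 1 := by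
  rw [signMat, diagonal_mul_diagonal, ← diagonal_one]
  congr 1
  funext y
  unfold sign
  split_ifs <;> norm_num

theorem commute_signMat (j k : Fin D) : Commute (signMat j) (signMat k) :=
  commute_diagonal _ _

theorem flipMat_mul_diagonal (k : Fin D) (d : Vtx D → ℂ) :
    flipMat k * diagonal d = diagonal (d ∘ flipCoord k) * flipMat k := by
  ext y z
  simp only [flipMat, mul_diagonal, diagonal_mul, PEquiv.toMatrix_apply, Equiv.toPEquiv_apply,
    Option.mem_def, Option.some.injEq, Function.comp_apply, ite_mul, mul_ite, one_mul, mul_one,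
    zero_mul, mul_zero]
  split_ifs with h <;> simp [h]

theorem commute_flipMat_signMat {j k : Fin D} (h : j ≠ k) : Commute (flipMat j) (signMat k) := by
  rw [Commute, SemiconjBy, signMat, flipMat_mul_diagonal]
  congr 2
  exact funext (sign_flipCoord_of_ne h)

theorem signMat_mul_flipMat (k : Fin D) : signMat k * flipMat k = -(flipMat k * signMat k) := by
  rw [signMat, flipMat_mul_diagonal, ← neg_mul, diagonal_neg]
  congr 2
  funext y
  rw [Function.comp_apply, sign_flipCoord_self, neg_neg]

theorem sum_signMat : ∑ k, signMat k = dualAdjMat D := by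
  ext y z
  by_cases h : y = z <;> simp [signMat, dualAdjMat, Matrix.sum_apply, h, sum_sign]

theorem sum_flipMat : ∑ k, flipMat k = adjMat D := by
  ext y z
  simp only [Matrix.sum_apply, flipMat, PEquiv.toMatrix_apply, Equiv.toPEquiv_apply,
    Option.mem_def, Option.some.injEq, flipCoord_eq_iff, adjMat]
  split_ifs with h
  · obtain ⟨a, ha⟩ := Finset.card_eq_one.mp h
    simp [ha]
  · refine Finset.sum_eq_zero fun k _ => if_neg fun hk => h ?_
    rw [hk, Finset.card_singleton]

end Hypercube

theorem cyclic_commutation_general (D : ℕ) :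
    adjMat D * dualAdjMat D - dualAdjMat D * adjMat D = (2 * Complex.I) • imagAdjMat D ∧
    dualAdjMat D * imagAdjMat D - imagAdjMat D * dualAdjMat D = (2 * Complex.I) • adjMat D ∧
    imagAdjMat D * adjMat D - adjMat D * imagAdjMat D = (2 * Complex.I) • dualAdjMat D := by
  open Hypercube in
  have hXX : Pairwise fun j k : Fin D => Commute (flipMat j) (flipMat k) :=
    fun j k _ => commute_flipMat j k
  have hZZ : Pairwise fun j k : Fin D => Commute (signMat j) (signMat k) :=
    fun j k _ => commute_signMat j k
  have hXZ : Pairwise fun j k : Fin D => Commute (flipMat j) (signMat k) :=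
    fun _ _ => commute_flipMat_signMat
  have hImag : imagAdjMat D = (-Complex.I) • ∑ k, flipMat k * signMat k := by
    rw [imagAdjMat, ← sum_flipMat, ← sum_signMat,
      commutator_sum_sum_of_anticommute _ _ hXZ signMat_mul_flipMat]
    module
  refine ⟨?_, ?_, ?_⟩
  · rw [imagAdjMat, smul_smul, show 2 * Complex.I * (-Complex.I / 2) = 1 by ring_nf; simp,
      one_smul]
  · rw [hImag, mul_smul_comm, smul_mul_assoc, ← smul_sub, ← sum_flipMat, ← sum_signMat,
      commutator_sum_sum_mul_of_anticommute _ _ hZZ hXZ signMat_mul_self signMat_mul_flipMat]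
    module
  · rw [hImag, smul_mul_assoc, mul_smul_comm, ← smul_sub, ← sum_flipMat, ← sum_signMat,
      commutator_sum_mul_sum_of_anticommute _ _ hXX hXZ flipMat_mul_self signMat_mul_flipMat]
    module

/-- The cyclic commutation relations `AA* - A*A = 2iAᵉ`,
`A*Aᵉ - AᵉA* = 2iA`, `AᵉA - AAᵉ = 2iA*`. -/
theorem cyclic_commutation (D : ℕ) (hD : 0 < D) :
    adjMat D * dualAdjMat D - dualAdjMat D * adjMat D = (2 * Complex.I) • imagAdjMat D ∧
    dualAdjMat D * imagAdjMat D - imagAdjMat D * dualAdjMat D = (2 * Complex.I) • adjMat D ∧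
    imagAdjMat D * adjMat D - adjMat D * imagAdjMat D = (2 * Complex.I) • dualAdjMat D :=
  cyclic_commutation_general D
end
end

section
/- The matrix P belongs to the Terwilliger algebra T, i.e. P lies in the subalgebra of Mat_X(ℂ) generated by A and A*. -/
noncomputable section

open Matrix Finset

/-! Since `P₁ = diag(1, -i) · H₁` with `H₁ = [[1, 1], [1, -1]]`, the matrix `P` is the diagonal
matrix `((-i)^{wt y})_y` times `H₁^{⊗D}`. The diagonal factor depends only on the eigenvalue
`D - 2 wt y` of `A*`, so it is a polynomial in `A*`. On the other hand `A + A*` is the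
Kronecker sum `∑ₖ H₁^{(k)}`, and the `D`-th Kronecker power of an eigenbasis of `H₁`
diagonalizes `A + A*` and `H₁^{⊗D}` simultaneously, with eigenvalues `∑ₖ c(sₖ)` and
`∏ₖ c(sₖ)`, where `c` takes the two distinct eigenvalues `±√2` of `H₁`. The sum determines
the number of `k` with `c(sₖ) = -√2`, hence the product, so `H₁^{⊗D}` is a polynomial in
`A + A*`. -/

namespace Matrix

variable {ι n R : Type*} [Fintype ι]

def piKronecker [CommMonoid R] (M : ι → Matrix n n R) : Matrix (ι → n) (ι → n) R :=
  of fun y z => ∏ i, M i (y i) (z i)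

@[simp]
lemma piKronecker_apply [CommMonoid R] (M : ι → Matrix n n R) (y z : ι → n) :
    piKronecker M y z = ∏ i, M i (y i) (z i) := rfl

lemma piKronecker_mul [DecidableEq ι] [Fintype n] [CommSemiring R] (M N : ι → Matrix n n R) :
    piKronecker M * piKronecker N = piKronecker (M * N) := by
  ext y z
  simp only [mul_apply, piKronecker_apply, Pi.mul_apply, Fintype.prod_sum, prod_mul_distrib]

lemma piKronecker_diagonal [DecidableEq n] [CommMonoidWithZero R] (d : ι → n → R) :
    piKronecker (fun i => diagonal (d i)) = diagonal fun y => ∏ i, d i (y i) := by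
  ext y z
  by_cases hyz : y = z
  · simp [hyz]
  · obtain ⟨i, hi⟩ := Function.ne_iff.mp hyz
    rw [piKronecker_apply, diagonal_apply_ne _ hyz]
    exact prod_eq_zero (mem_univ i) (diagonal_apply_ne _ hi)

lemma piKronecker_one [DecidableEq n] [CommMonoidWithZero R] :
    piKronecker (1 : ι → Matrix n n R) = 1 := by
  ext y z
  simp [one_apply, prod_boole, funext_iff]

variable [DecidableEq ι] [DecidableEq n] [CommSemiring R]

lemma piKronecker_mulSingle_apply (i : ι) (M : Matrix n n R) (y z : ι → n) :
    piKronecker (Pi.mulSingle i M) y z =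
      M (y i) (z i) * ∏ j ∈ univ.erase i, (1 : Matrix n n R) (y j) (z j) := by
  rw [piKronecker_apply, ← mul_prod_erase univ _ (mem_univ i), Pi.mulSingle_eq_same]
  congr 1
  exact prod_congr rfl fun j hj => by rw [Pi.mulSingle_eq_of_ne (ne_of_mem_erase hj)]

lemma piKronecker_mulSingle_add (i : ι) (M N : Matrix n n R) :
    piKronecker (Pi.mulSingle i (M + N)) =
      piKronecker (Pi.mulSingle i M) + piKronecker (Pi.mulSingle i N) := by
  ext y z
  simp only [piKronecker_mulSingle_apply, add_apply, add_mul]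

lemma piKronecker_mulSingle_diagonal (i : ι) (c : n → R) :
    piKronecker (Pi.mulSingle i (diagonal c)) = diagonal fun y => c (y i) := by
  have : Pi.mulSingle i (diagonal c) =
      fun j => diagonal ((Pi.mulSingle i c : ι → n → R) j) := by
    funext j
    by_cases hj : j = i
    · subst hj; simp
    · simp [Pi.mulSingle_eq_of_ne hj]
  rw [this, piKronecker_diagonal]
  congr 1
  funext y
  rw [Fintype.prod_eq_single i fun j hj => by simp [Pi.mulSingle_eq_of_ne hj]]
  simp

variable (ι) in
def kroneckerSum (M : Matrix n n R) : Matrix (ι → n) (ι → n) R :=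
  ∑ i, piKronecker (Pi.mulSingle i M)

lemma kroneckerSum_add (M N : Matrix n n R) :
    kroneckerSum ι (M + N) = kroneckerSum ι M + kroneckerSum ι N := by
  simp only [kroneckerSum, piKronecker_mulSingle_add, sum_add_distrib]

lemma kroneckerSum_diagonal (c : n → R) :
    kroneckerSum ι (diagonal c) = diagonal fun y => ∑ i, c (y i) := by
  ext y z
  by_cases hyz : y = z <;> simp [kroneckerSum, piKronecker_mulSingle_diagonal, sum_apply, hyz]

def piKroneckerHom [Fintype n] : (ι → Matrix n n R) →* Matrix (ι → n) (ι → n) R where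
  toFun := piKronecker
  map_one' := piKronecker_one
  map_mul' M N := (piKronecker_mul M N).symm

lemma kroneckerSum_conj [Fintype n] {a b : Matrix n n R} (hab : a * b = 1) (M : Matrix n n R) :
    kroneckerSum ι (a * M * b) =
      piKronecker (fun _ => a) * kroneckerSum ι M * piKronecker (fun _ => b) := by
  simp only [kroneckerSum, mul_sum, sum_mul, piKronecker_mul]
  refine sum_congr rfl fun i _ => congrArg piKronecker (funext fun j => ?_)
  by_cases hj : j = i
  · subst hj; simp
  · simp [Pi.mulSingle_eq_of_ne hj, hab]

end Matrix

lemma Algebra.conj_mem_adjoin_singleton {R A : Type*} [CommSemiring R] [Semiring A] [Algebra R A]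
    (u : Aˣ) {x y : A} (hx : x ∈ Algebra.adjoin R {y}) :
    ↑u * x * ↑u⁻¹ ∈ Algebra.adjoin R {↑u * y * ↑u⁻¹} := by
  let e := (MulSemiringAction.toAlgEquiv R A (ConjAct.toConjAct u)).toAlgHom
  have he (z : A) : e z = ↑u * z * ↑u⁻¹ := ConjAct.units_smul_def _ z
  rw [← he, ← he, ← Set.image_singleton, ← AlgHom.map_adjoin]
  exact Subalgebra.mem_map.mpr ⟨x, hx, rfl⟩

lemma Matrix.diagonal_mem_adjoin_diagonal {K X : Type*} [Field K] [Fintype X] [DecidableEq X]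
    {d g : X → K} (h : ∀ x y, d x = d y → g x = g y) :
    diagonal g ∈ Algebra.adjoin K {diagonal d} := by
  obtain ⟨q, hq⟩ := (Polynomial.exists_eval_eq_iff d g).mpr h
  have hdiag : Polynomial.aeval (diagonal d) q = diagonal g := by
    rw [← diagonalAlgHom_apply (R := K), Polynomial.aeval_algHom_apply, Polynomial.aeval_pi_apply]
    simp only [diagonalAlgHom_apply, Polynomial.coe_aeval_eq_eval, hq]
  exact hdiag ▸ Polynomial.aeval_mem_adjoin_singleton K _

@[to_additive]
lemma Fintype.prod_comp_bool {ι M : Type*} [Fintype ι] [CommMonoid M] (f : Bool → M)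
    (y : ι → Bool) : ∏ i, f (y i) = f true ^ #{i | y i} * f false ^ #{i | ¬y i} := by
  calc ∏ i, f (y i) = ∏ i, if y i then f true else f false :=
        Finset.prod_congr rfl fun i _ => by cases y i <;> rfl
    _ = _ := by rw [prod_ite, prod_const, prod_const]

lemma Fintype.prod_comp_eq_of_sum_comp_eq {ι R M : Type*} [Fintype ι] [CommRing R]
    [NoZeroDivisors R] [CharZero R] [CommMonoid M] {c : Bool → R} (hc : c false ≠ c true)
    (f : Bool → M) {y z : ι → Bool} (h : ∑ i, c (y i) = ∑ i, c (z i)) :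
    ∏ i, f (y i) = ∏ i, f (z i) := by
  have hy := card_filter_add_card_filter_not (s := univ) fun i => y i = true
  have hz := card_filter_add_card_filter_not (s := univ) fun i => z i = true
  rw [sum_comp_bool, sum_comp_bool] at h
  have hcount : #{i | y i} = #{i | z i} := by
    have hcast : (#{i | y i} : R) + #{i | ¬y i} = #{i | z i} + #{i | ¬z i} := by
      exact_mod_cast hy.trans hz.symm
    have : ((#{i | y i} : R) - #{i | z i}) * (c true - c false) = 0 := by
      simp only [nsmul_eq_mul] at h
      linear_combination h - c false * hcast
    rcases mul_eq_zero.mp this with h0 | h0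
    · exact_mod_cast sub_eq_zero.mp h0
    · exact absurd (sub_eq_zero.mp h0).symm hc
  rw [prod_comp_bool, prod_comp_bool, hcount, show #{i | ¬y i} = #{i | ¬z i} by omega]

theorem Matrix.piKronecker_const_mem_adjoin_kroneckerSum {ι K : Type*} [Fintype ι]
    [DecidableEq ι] [Field K] [CharZero K] {M : Matrix Bool Bool K} (u : (Matrix Bool Bool K)ˣ)
    {c : Bool → K} (hM : M * u = u * diagonal c) (hc : c false ≠ c true) :
    piKronecker (fun _ : ι => M) ∈ Algebra.adjoin K {kroneckerSum ι M} := by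
  have hMu : M = u * diagonal c * (↑(u⁻¹) : Matrix Bool Bool K) := by
    rw [← hM, Units.mul_inv_cancel_right]
  have hprod : piKronecker (fun _ : ι => M) =
      piKronecker (fun _ => (u : Matrix Bool Bool K)) * piKronecker (fun _ => diagonal c) *
        piKronecker (fun _ => (↑(u⁻¹) : Matrix Bool Bool K)) := by
    rw [piKronecker_mul, piKronecker_mul, hMu]
    rfl
  let U := Units.map (piKroneckerHom.comp (Pi.constMonoidHom ι _)) u
  have hU : (U : Matrix (ι → Bool) (ι → Bool) K) = piKronecker fun _ => ↑u := rfl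
  have hU' : (↑(U⁻¹) : Matrix (ι → Bool) (ι → Bool) K) = piKronecker fun _ => ↑(u⁻¹) :=
    rfl
  rw [hprod, piKronecker_diagonal, hMu, kroneckerSum_conj u.mul_inv, kroneckerSum_diagonal,
    ← hU, ← hU']
  exact Algebra.conj_mem_adjoin_singleton U
    (diagonal_mem_adjoin_diagonal fun y z h => Fintype.prod_comp_eq_of_sum_comp_eq hc c h)

def pauliX : Matrix Bool Bool ℂ := of fun a b => if a = b then 0 else 1

def pauliZ : Matrix Bool Bool ℂ := diagonal fun b => if b then -1 else 1

def hadamardMatrix : Matrix Bool Bool ℂ := of fun a b => if a && b then -1 else 1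

lemma pauliX_add_pauliZ : pauliX + pauliZ = hadamardMatrix := by
  ext a b
  cases a <;> cases b <;> simp [pauliX, pauliZ, hadamardMatrix]

lemma piKronecker_mulSingle_pauliX_apply {D : ℕ} (i : Fin D) (y z : Vtx D) :
    piKronecker (Pi.mulSingle i pauliX) y z =
      if ({k | y k ≠ z k} : Finset (Fin D)) = {i} then 1 else 0 := by
  have hfactor (j : Fin D) :
      (Pi.mulSingle i pauliX : Fin D → Matrix Bool Bool ℂ) j (y j) (z j) =
        if (y j ≠ z j ↔ j = i) then 1 else 0 := by
    by_cases hj : j = i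
    · subst hj; by_cases hyz : y j = z j <;> simp [pauliX, hyz]
    · by_cases hyz : y j = z j <;> simp [one_apply, hyz, hj]
  simp only [piKronecker_apply, hfactor, prod_boole, mem_univ, true_implies]
  refine if_congr ?_ rfl rfl
  simp only [Finset.ext_iff, mem_filter, mem_univ, true_and, mem_singleton]

lemma adjMat_eq_kroneckerSum (D : ℕ) : adjMat D = kroneckerSum (Fin D) pauliX := by
  ext y z
  simp only [kroneckerSum, Matrix.sum_apply, piKronecker_mulSingle_pauliX_apply]
  change (if #{k | y k ≠ z k} = 1 then 1 else 0) = _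
  by_cases hcard : #{k | y k ≠ z k} = 1
  · obtain ⟨a, ha⟩ := card_eq_one.mp hcard
    simp [ha]
  · rw [if_neg hcard]
    refine (sum_eq_zero fun i _ => if_neg fun hi => hcard ?_).symm
    rw [hi, card_singleton]

lemma dualAdjMat_eq_diagonal_sum (D : ℕ) :
    dualAdjMat D = diagonal fun y => ∑ i, if y i then -1 else 1 := by
  unfold dualAdjMat
  congr 1
  funext y
  have hcard : (#{i | y i} : ℂ) + #{i | ¬y i} = D := by
    exact_mod_cast (card_filter_add_card_filter_not (s := univ) fun i => y i = true).trans
      (card_fin D)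
  rw [Fintype.sum_comp_bool (fun b : Bool => if b then (-1 : ℂ) else 1), wt]
  simp only [nsmul_eq_mul, if_true, Bool.false_eq_true, if_false]
  linear_combination -hcard

lemma kroneckerSum_hadamardMatrix (D : ℕ) :
    kroneckerSum (Fin D) hadamardMatrix = adjMat D + dualAdjMat D := by
  rw [← pauliX_add_pauliZ, kroneckerSum_add, adjMat_eq_kroneckerSum, dualAdjMat_eq_diagonal_sum,
    pauliZ, kroneckerSum_diagonal]

lemma Pmat_eq_diagonal_mul_piKronecker (D : ℕ) :
    Pmat D = diagonal (fun y : Vtx D => ∏ i, if y i then -Complex.I else 1) *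
      piKronecker fun _ : Fin D => hadamardMatrix := by
  have hP1 : (of P1 : Matrix Bool Bool ℂ) =
      diagonal (fun b : Bool => if b then -Complex.I else 1) * hadamardMatrix := by
    ext a b
    cases a <;> cases b <;> simp [P1, hadamardMatrix]
  calc Pmat D = piKronecker (fun _ => diagonal fun b : Bool => if b then -Complex.I else 1) *
        piKronecker fun _ : Fin D => hadamardMatrix := by
        rw [piKronecker_mul]
        exact congrArg piKronecker (funext fun _ => hP1)
    _ = _ := by rw [piKronecker_diagonal]

lemma exists_hadamardMatrix_mul_eq_mul_diagonal :
    ∃ (u : (Matrix Bool Bool ℂ)ˣ) (c : Bool → ℂ),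
      hadamardMatrix * u = u * diagonal c ∧ c false ≠ c true := by
  have hH : hadamardMatrix.IsHermitian := by
    ext a b
    cases a <;> cases b <;> simp [hadamardMatrix]
  have hspec := hH.spectral_theorem
  rw [Unitary.conjStarAlgAut_apply] at hspec
  set U := hH.eigenvectorUnitary
  set c : Bool → ℂ := RCLike.ofReal ∘ hH.eigenvalues
  refine ⟨Unitary.toUnits U, c, ?_, fun hc => ?_⟩
  · conv_lhs => rw [hspec]
    simp [mul_assoc]
  · have hscalar : diagonal c = c false • 1 := by
      ext a b
      cases a <;> cases b <;> simp [hc]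
    rw [hscalar, mul_smul_comm, smul_mul_assoc, mul_one,
      Unitary.mul_star_self_of_mem U.2] at hspec
    simpa [hadamardMatrix] using congrFun (congrFun hspec false) true

theorem Pmat_mem_Terwilliger_general (D : ℕ) :
    Pmat D ∈ Algebra.adjoin ℂ ({adjMat D, dualAdjMat D} : Set (Matrix (Vtx D) (Vtx D) ℂ)) := by
  set T := Algebra.adjoin ℂ ({adjMat D, dualAdjMat D} : Set (Matrix (Vtx D) (Vtx D) ℂ))
  have hA : adjMat D ∈ T := Algebra.subset_adjoin (by simp)
  have hAstar : dualAdjMat D ∈ T := Algebra.subset_adjoin (by simp)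
  have hphase : diagonal (fun y : Vtx D => ∏ i, if y i then -Complex.I else 1) ∈
      Algebra.adjoin ℂ {dualAdjMat D} := by
    rw [dualAdjMat_eq_diagonal_sum]
    exact diagonal_mem_adjoin_diagonal fun y z h =>
      Fintype.prod_comp_eq_of_sum_comp_eq (c := fun b => if b then -1 else 1) (by norm_num)
        (fun b => if b then -Complex.I else 1) h
  have hhadamard : piKronecker (fun _ : Fin D => hadamardMatrix) ∈
      Algebra.adjoin ℂ {adjMat D + dualAdjMat D} := by
    obtain ⟨u, c, hu, hc⟩ := exists_hadamardMatrix_mul_eq_mul_diagonal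
    rw [← kroneckerSum_hadamardMatrix]
    exact piKronecker_const_mem_adjoin_kroneckerSum u hu hc
  rw [Pmat_eq_diagonal_mul_piKronecker]
  exact mul_mem (Algebra.adjoin_singleton_le hAstar hphase)
    (Algebra.adjoin_singleton_le (add_mem hA hAstar) hhadamard)

/-- `P` belongs to the Terwilliger algebra `T`, the subalgebra of
`Mat_X(ℂ)` generated by `A` and `A*`. -/
theorem Pmat_mem_Terwilliger (D : ℕ) (hD : 0 < D) :
    Pmat D ∈ Algebra.adjoin ℂ ({adjMat D, dualAdjMat D} : Set (Matrix (Vtx D) (Vtx D) ℂ)) :=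
  Pmat_mem_Terwilliger_general D
end
end

section
/- The matrix P satisfies P·(conjugate of P)ᵗ = 2^D·I and P³ = 2^D·(1−i)^D·I; in particular P is invertible. -/
noncomputable section

open Matrix Finset

/-! `P` is the Kronecker power `P₁^{⊗D}`, and taking Kronecker powers is multiplicative and
commutes with the conjugate transpose. Both identities therefore reduce to the `2 × 2`
computations `P₁ P₁ᴴ = 2 I` and `P₁³ = 2(1 - i) I`; the first one exhibits `2⁻ᴰ Pᴴ` as an
inverse of `P`. -/

namespace Matrix

variable {ι α R : Type*} [Fintype ι]

def kroneckerPi [CommSemiring R] (M : Matrix α α R) : Matrix (ι → α) (ι → α) R :=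
  of fun y z => ∏ k, M (y k) (z k)

variable [CommSemiring R]

theorem kroneckerPi_mul [Fintype α] [DecidableEq ι] (M N : Matrix α α R) :
    kroneckerPi (ι := ι) (M * N) = kroneckerPi M * kroneckerPi N := by
  ext y z
  simp only [kroneckerPi, mul_apply, of_apply, prod_univ_sum, Fintype.piFinset_univ,
    prod_mul_distrib]

theorem kroneckerPi_one [DecidableEq ι] [DecidableEq α] :
    kroneckerPi (ι := ι) (1 : Matrix α α R) = 1 := by
  ext y z
  by_cases h : y = z
  · simp [kroneckerPi, h, one_apply]
  · obtain ⟨k, hk⟩ := Function.ne_iff.mp h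
    simp only [kroneckerPi, of_apply, one_apply, h, if_false]
    exact prod_eq_zero (mem_univ k) (if_neg hk)

theorem kroneckerPi_smul (c : R) (M : Matrix α α R) :
    kroneckerPi (ι := ι) (c • M) = c ^ Fintype.card ι • kroneckerPi M := by
  ext y z
  simp [kroneckerPi, prod_mul_distrib]

theorem kroneckerPi_pow [Fintype α] [DecidableEq ι] [DecidableEq α] (M : Matrix α α R)
    (n : ℕ) : kroneckerPi (ι := ι) (M ^ n) = kroneckerPi M ^ n := by
  induction n with
  | zero => simp [kroneckerPi_one]
  | succ n ih => rw [pow_succ, kroneckerPi_mul, ih, pow_succ]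

theorem conjTranspose_kroneckerPi [StarRing R] (M : Matrix α α R) :
    (kroneckerPi (ι := ι) M)ᴴ = kroneckerPi Mᴴ := by
  ext y z
  simp [kroneckerPi, star_prod]

end Matrix

open Complex

theorem Pmat_eq_kroneckerPi (D : ℕ) : Pmat D = kroneckerPi (of P1) := rfl

theorem P1_mul_conjTranspose : of P1 * (of P1)ᴴ = (2 : ℂ) • 1 := by
  ext a b
  cases a <;> cases b <;> norm_num [P1, mul_apply, one_apply]

theorem P1_pow_three : of P1 ^ 3 = (2 * (1 - I)) • 1 := by
  ext a b
  cases a <;> cases b <;> norm_num [P1, pow_succ, mul_apply, one_apply, Complex.ext_iff]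

theorem Pmat_relations_general (D : ℕ) :
    Pmat D * ((Pmat D).map (starRingEnd ℂ)).transpose
        = ((2 : ℂ) ^ D) • (1 : Matrix (Vtx D) (Vtx D) ℂ) ∧
    Pmat D ^ 3 = ((2 : ℂ) ^ D * (1 - Complex.I) ^ D) • (1 : Matrix (Vtx D) (Vtx D) ℂ) ∧
    IsUnit (Pmat D) := by
  have hunitary : Pmat D * (Pmat D)ᴴ = (2 : ℂ) ^ D • 1 := by
    rw [Pmat_eq_kroneckerPi, conjTranspose_kroneckerPi, ← kroneckerPi_mul,
      P1_mul_conjTranspose, kroneckerPi_smul, kroneckerPi_one, Fintype.card_fin]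
  refine ⟨hunitary, ?_, ?_⟩
  · rw [Pmat_eq_kroneckerPi, ← kroneckerPi_pow, P1_pow_three, kroneckerPi_smul,
      kroneckerPi_one, Fintype.card_fin, mul_pow]
  · refine IsUnit.of_mul_eq_one (((2 : ℂ) ^ D)⁻¹ • (Pmat D)ᴴ) ?_
    rw [Matrix.mul_smul, hunitary, smul_smul, inv_mul_cancel₀ (pow_ne_zero D two_ne_zero), one_smul]

/-- `P·(conj P)ᵗ = 2^D·I`, `P³ = 2^D·(1-i)^D·I`; in particular `P` is
invertible. -/
theorem Pmat_relations (D : ℕ) (hD : 0 < D) :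
    Pmat D * ((Pmat D).map (starRingEnd ℂ)).transpose
        = ((2 : ℂ) ^ D) • (1 : Matrix (Vtx D) (Vtx D) ℂ) ∧
    Pmat D ^ 3 = ((2 : ℂ) ^ D * (1 - Complex.I) ^ D) • (1 : Matrix (Vtx D) (Vtx D) ℂ) ∧
    IsUnit (Pmat D) :=
  Pmat_relations_general D
end
end

section
/- The matrix A^ε is diagonalizable; its eigenvalues are exactly D − 2i for 0 ≤ i ≤ D, and for each 0 ≤ i ≤ D the eigenspace of A^ε for the eigenvalue D − 2i has dimension binom(D, i). In particular ℂ^X is the direct sum of these eigenspaces. -/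
/-!
Identify `ℂ^X` with `(ℂ²)^{⊗D}`. Then `A* = ∑ₖ Zₖ` with `Z = diag(1, -1)` acting on the
`k`-th tensor factor, and, since `A` flips one coordinate and `A*` measures the weight,
`Aᵉ = ∑ₖ Yₖ` with `Y = [[0, i], [-i, 0]]`. As `Y P₁ = P₁ Z`, the Kronecker power
`P = P₁^{⊗D}` satisfies `Aᵉ P = P A*`, so `Aᵉ` is similar to the diagonal matrix `A*`, whose
eigenspace for `D - 2i` is spanned by the `binom(D, i)` vertices of weight `i`.
-/
noncomputable section

open Matrix Finset

namespace Module.End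

variable {R M M₂ : Type*} [CommRing R] [AddCommGroup M] [Module R M] [AddCommGroup M₂]
  [Module R M₂]

theorem eigenspace_conj (e : M ≃ₗ[R] M₂) (f : End R M) (μ : R) :
    eigenspace (e.conj f) μ = (eigenspace f μ).map (e : M →ₗ[R] M₂) := by
  ext v
  rw [Submodule.mem_map_equiv, mem_eigenspace_iff, mem_eigenspace_iff, LinearEquiv.conj_apply_apply,
    ← e.symm.injective.eq_iff, LinearEquiv.symm_apply_apply, LinearEquiv.map_smul]

theorem hasEigenvalue_conj_iff (e : M ≃ₗ[R] M₂) (f : End R M) (μ : R) :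
    HasEigenvalue (e.conj f) μ ↔ HasEigenvalue f μ := by
  simp only [hasEigenvalue_iff, eigenspace_conj, ne_eq, Submodule.map_eq_bot_iff]

end Module.End

namespace Matrix

variable {n K : Type*} [Fintype n] [DecidableEq n]

theorem mulVecLin_eq_conj_of_mul_eq [CommRing K] {M N P : Matrix n n K} (hP : Invertible P)
    (h : M * P = P * N) : M.mulVecLin = (P.toLinearEquiv' hP).conj N.mulVecLin := by
  have hM : M = P * N * ⅟P := by rw [← h, mul_assoc, mul_invOf_self, mul_one]
  ext1 v
  rw [LinearEquiv.conj_apply, hM]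
  simp [← toLin'_apply', toLin'_mul]

theorem finrank_eigenspace_diagonal [Field K] [DecidableEq K] (d : n → K) (μ : K) :
    Module.finrank K (Module.End.eigenspace (diagonal d).mulVecLin μ)
      = Fintype.card {i // d i = μ} := by
  have hker : Module.End.eigenspace (diagonal d).mulVecLin μ
      = LinearMap.ker (diagonal fun i => d i - μ).mulVecLin := by
    rw [Module.End.eigenspace_def]
    congr 1
    refine LinearMap.ext fun v => funext fun i => ?_
    simp [mulVec_diagonal, sub_mul]
  have hrank := LinearMap.finrank_range_add_finrank_ker (diagonal fun i => d i - μ).mulVecLin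
  rw [← Matrix.rank, rank_diagonal, Module.finrank_fintype_fun_eq_card, ← hker] at hrank
  have hcompl := Fintype.card_subtype_compl (fun i => d i = μ)
  simp only [sub_ne_zero, ne_eq] at hrank
  have := Fintype.card_subtype_le (fun i => d i = μ)
  omega

section KroneckerPow

variable (ι : Type*) {α R : Type*} [Fintype ι]

def kroneckerPow [CommMonoid R] (M : Matrix α α R) :
    Matrix (ι → α) (ι → α) R :=
  of fun y z => ∏ k, M (y k) (z k)

variable {ι}

theorem kroneckerPow_mul [DecidableEq ι] [Fintype α] [CommSemiring R] (M N : Matrix α α R) :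
    kroneckerPow ι M * kroneckerPow ι N = kroneckerPow ι (M * N) := by
  ext y z
  simp only [kroneckerPow, mul_apply, of_apply, Fintype.prod_sum, ← prod_mul_distrib]

theorem kroneckerPow_one [DecidableEq α] [CommMonoidWithZero R] :
    kroneckerPow ι (1 : Matrix α α R) = 1 := by
  ext y z
  simp only [kroneckerPow, of_apply, one_apply, prod_boole, mem_univ, true_implies, funext_iff]

end KroneckerPow

end Matrix

def P1inv : Bool → Bool → ℂ
  | false, false => 1 / 2
  | false, true  => Complex.I / 2
  | true,  false => 1 / 2
  | true,  true  => -Complex.I / 2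

theorem Pmat_eq_kroneckerPow (D : ℕ) : Pmat D = kroneckerPow (Fin D) (of P1) := rfl

theorem P1_mul_P1inv : of P1 * of P1inv = 1 := by
  ext b c
  cases b <;> cases c <;> simp [P1, P1inv, mul_apply, Complex.ext_iff] <;> norm_num

theorem Pmat_mul_kroneckerPow_P1inv (D : ℕ) : Pmat D * kroneckerPow (Fin D) (of P1inv) = 1 := by
  rw [Pmat_eq_kroneckerPow, kroneckerPow_mul, P1_mul_P1inv, kroneckerPow_one]

def flipAt {D : ℕ} (k : Fin D) (y : Vtx D) : Vtx D := Function.update y k (!y k)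

theorem eq_flipAt_iff {D : ℕ} {k : Fin D} {y w : Vtx D} :
    w = flipAt k y ↔ (univ.filter fun j => y j ≠ w j) = {k} := by
  simp only [funext_iff, Finset.ext_iff, flipAt, Function.update_apply, mem_filter, mem_univ,
    true_and, mem_singleton]
  refine forall_congr' fun j => ?_
  rcases eq_or_ne j k with rfl | hj <;> cases y j <;> cases w j <;> simp [*]

theorem adjMat_apply {D : ℕ} (y w : Vtx D) :
    adjMat D y w = ∑ k, if w = flipAt k y then 1 else 0 := by
  simp only [adjMat, eq_flipAt_iff, sum_boole, Finset.card_eq_one]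
  split_ifs with h
  · obtain ⟨k, hk⟩ := h
    simp [hk, Finset.singleton_inj, Finset.filter_eq]
  · simp_all

def boolSign (b : Bool) : ℂ := if b then -1 else 1

theorem sub_two_mul_wt_eq_sum_boolSign {D : ℕ} (y : Vtx D) :
    (D : ℂ) - 2 * wt y = ∑ k, boolSign (y k) := by
  have h (b : Bool) : boolSign b = 1 - 2 * if b then 1 else 0 := by cases b <;> norm_num [boolSign]
  simp only [h, sum_sub_distrib, ← mul_sum, sum_boole]
  simp [wt]

theorem sum_boolSign_flipAt {D : ℕ} (k : Fin D) (y : Vtx D) :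
    ∑ j, boolSign (flipAt k y j) = ∑ j, boolSign (y j) - 2 * boolSign (y k) := by
  have hnot : boolSign (!y k) = -boolSign (y k) := by cases y k <;> simp [boolSign]
  simp only [flipAt, Function.apply_update (fun _ => boolSign), sum_update_of_mem (mem_univ k),
    sum_eq_add_sum_sdiff_singleton_of_mem (mem_univ k) (fun j => boolSign (y j)), hnot]
  ring

theorem imagAdjMat_apply {D : ℕ} (y w : Vtx D) :
    imagAdjMat D y w = ∑ k, if w = flipAt k y then Complex.I * boolSign (y k) else 0 := by
  simp only [imagAdjMat, dualAdjMat, Matrix.smul_apply, Matrix.sub_apply, mul_diagonal,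
    diagonal_mul, adjMat_apply, smul_eq_mul, sum_mul, mul_sum, ← sum_sub_distrib]
  refine sum_congr rfl fun k _ => ?_
  split_ifs with h
  · rw [h, sub_two_mul_wt_eq_sum_boolSign, sub_two_mul_wt_eq_sum_boolSign, sum_boolSign_flipAt]
    ring
  · simp

theorem Pmat_update_apply {D : ℕ} (y z : Vtx D) (k : Fin D) (b : Bool) :
    Pmat D (Function.update y k b) z = P1 b (z k) * ∏ j ∈ univ \ {k}, P1 (y j) (z j) := by
  simp only [Pmat, Function.apply_update (fun j a => P1 a (z j)), prod_update_of_mem (mem_univ k)]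

theorem I_mul_boolSign_mul_P1 (b c : Bool) :
    Complex.I * boolSign b * P1 (!b) c = P1 b c * boolSign c := by
  cases b <;> cases c <;> simp [boolSign, P1]

theorem imagAdjMat_mul_Pmat (D : ℕ) : imagAdjMat D * Pmat D = Pmat D * dualAdjMat D := by
  ext y z
  have hlhs : (imagAdjMat D * Pmat D) y z
      = ∑ k, Complex.I * boolSign (y k) * Pmat D (flipAt k y) z := by
    simp only [mul_apply, imagAdjMat_apply, sum_mul, ite_mul, zero_mul]
    rw [sum_comm]
    simp
  rw [hlhs, dualAdjMat, mul_diagonal, sub_two_mul_wt_eq_sum_boolSign, mul_sum]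
  refine sum_congr rfl fun k _ => ?_
  conv_rhs => rw [← Function.update_eq_self k y]
  rw [flipAt, Pmat_update_apply, Pmat_update_apply]
  linear_combination (∏ j ∈ univ \ {k}, P1 (y j) (z j)) * I_mul_boolSign_mul_P1 (y k) (z k)

theorem wt_le {D : ℕ} (y : Vtx D) : wt y ≤ D := by
  simpa [wt] using card_filter_le univ fun k => y k = true

def vtxEquivFinset (D : ℕ) : Vtx D ≃ Finset (Fin D) where
  toFun y := univ.filter fun k => y k = true
  invFun s k := decide (k ∈ s)
  left_inv y := by ext k; simp
  right_inv s := by ext k; simp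

theorem card_wt_eq (D i : ℕ) : Fintype.card {y : Vtx D // wt y = i} = D.choose i := by
  refine (Fintype.card_congr ?_).trans (by simp : Fintype.card {s : Finset (Fin D) // #s = i} = _)
  exact (vtxEquivFinset D).subtypeEquiv fun y => Iff.rfl

theorem exists_wt_eq {D i : ℕ} (hi : i ≤ D) : ∃ y : Vtx D, wt y = i := by
  obtain ⟨y⟩ : Nonempty {y : Vtx D // wt y = i} := by
    rw [← Fintype.card_pos_iff, card_wt_eq]
    exact Nat.choose_pos hi
  exact ⟨y, y.2⟩

theorem dualAdjMat_hasEigenvalue_iff (D : ℕ) (μ : ℂ) :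
    Module.End.HasEigenvalue (dualAdjMat D).mulVecLin μ ↔
      ∃ i ≤ D, μ = (D : ℂ) - 2 * (i : ℂ) := by
  rw [dualAdjMat, ← toLin'_apply', hasEigenvalue_toLin'_diagonal_iff]
  constructor
  · rintro ⟨y, rfl⟩
    exact ⟨wt y, wt_le y, rfl⟩
  · rintro ⟨i, hi, rfl⟩
    obtain ⟨y, rfl⟩ := exists_wt_eq hi
    exact ⟨y, rfl⟩

theorem finrank_eigenspace_dualAdjMat (D i : ℕ) :
    Module.finrank ℂ (Module.End.eigenspace (dualAdjMat D).mulVecLin ((D : ℂ) - 2 * (i : ℂ)))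
      = D.choose i := by
  rw [dualAdjMat, finrank_eigenspace_diagonal, ← card_wt_eq]
  exact Fintype.card_congr <| Equiv.subtypeEquivRight fun y => by
    rw [sub_right_inj, mul_right_inj' two_ne_zero, Nat.cast_inj]

theorem iSup_eigenspace_dualAdjMat (D : ℕ) :
    ⨆ i ∈ range (D + 1),
      Module.End.eigenspace (dualAdjMat D).mulVecLin ((D : ℂ) - 2 * (i : ℂ)) = ⊤ := by
  have hall : ⨆ μ, Module.End.eigenspace (dualAdjMat D).mulVecLin μ = ⊤ :=
    iSup_eigenspace_toLin'_diagonal_eq_top _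
  refine eq_top_iff.mpr <| hall.symm.le.trans <| iSup_le fun μ => ?_
  by_cases hμ : Module.End.HasEigenvalue (dualAdjMat D).mulVecLin μ
  · obtain ⟨i, hi, rfl⟩ := (dualAdjMat_hasEigenvalue_iff D μ).mp hμ
    exact le_iSup₂_of_le (f := fun i (_ : i ∈ range (D + 1)) => _) i
      (mem_range.mpr (Nat.lt_succ_of_le hi)) le_rfl
  · rw [Module.End.hasEigenvalue_iff, not_not] at hμ
    rw [hμ]
    exact bot_le

theorem imagAdjMat_diagonalizable_general (D : ℕ) :
    (∀ μ : ℂ, Module.End.HasEigenvalue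
        ((imagAdjMat D).mulVecLin : Module.End ℂ (Vtx D → ℂ)) μ ↔
      ∃ i ≤ D, μ = (D : ℂ) - 2 * (i : ℂ)) ∧
    (∀ i ≤ D, Module.finrank ℂ
        (Module.End.eigenspace ((imagAdjMat D).mulVecLin : Module.End ℂ (Vtx D → ℂ))
          ((D : ℂ) - 2 * (i : ℂ))) = D.choose i) ∧
    (⨆ i ∈ Finset.range (D + 1),
        Module.End.eigenspace ((imagAdjMat D).mulVecLin : Module.End ℂ (Vtx D → ℂ))
          ((D : ℂ) - 2 * (i : ℂ))) = ⊤ := by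
  let e := (Pmat D).toLinearEquiv' (invertibleOfRightInverse _ _ (Pmat_mul_kroneckerPow_P1inv D))
  have hconj : (imagAdjMat D).mulVecLin = e.conj (dualAdjMat D).mulVecLin :=
    mulVecLin_eq_conj_of_mul_eq _ (imagAdjMat_mul_Pmat D)
  refine ⟨fun μ => ?_, fun i _ => ?_, ?_⟩
  · rw [hconj, Module.End.hasEigenvalue_conj_iff, dualAdjMat_hasEigenvalue_iff]
  · rw [hconj, Module.End.eigenspace_conj, LinearEquiv.finrank_map_eq,
      finrank_eigenspace_dualAdjMat]
  · simp only [hconj, Module.End.eigenspace_conj, ← Submodule.map_iSup,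
      iSup_eigenspace_dualAdjMat, Submodule.map_top, LinearEquiv.range]

/-- `Aᵉ` is diagonalizable: its eigenvalues are exactly `D - 2i` for
`0 ≤ i ≤ D`, the eigenspace for `D - 2i` has dimension `binom(D,i)`, and `ℂ^X` is the
(direct) sum of these eigenspaces. -/
theorem imagAdjMat_diagonalizable (D : ℕ) (hD : 0 < D) :
    (∀ μ : ℂ, Module.End.HasEigenvalue
        ((imagAdjMat D).mulVecLin : Module.End ℂ (Vtx D → ℂ)) μ ↔
      ∃ i ≤ D, μ = (D : ℂ) - 2 * (i : ℂ)) ∧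
    (∀ i ≤ D, Module.finrank ℂ
        (Module.End.eigenspace ((imagAdjMat D).mulVecLin : Module.End ℂ (Vtx D → ℂ))
          ((D : ℂ) - 2 * (i : ℂ))) = D.choose i) ∧
    (⨆ i ∈ Finset.range (D + 1),
        Module.End.eigenspace ((imagAdjMat D).mulVecLin : Module.End ℂ (Vtx D → ℂ))
          ((D : ℂ) - 2 * (i : ℂ))) = ⊤ :=
  imagAdjMat_diagonalizable_general D
end
end

section
/- Let W denote an irreducible T-module with endpoint r, set d = D − 2r, and let u ∈ E_r W be nonzero. Then A^ε acts on the basis E*_r u, ..., E*_{r+d} u by: for 0 ≤ j ≤ d, A^ε(E*_{r+j} u) = i(d−j+1)·E*_{r+j−1} u − i(j+1)·E*_{r+j+1} u, where the terms with index r−1 or r+d+1 are interpreted as 0. -/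
noncomputable section

open Matrix Finset

/-!
Split `A = lower + raise` according to whether a step moves towards or away from `x`. Counting
flips gives `⁅lower, raise⁆ = A*`, `⁅A*, lower⁆ = 2 lower` and `⁅A*, raise⁆ = -2 raise`, so
`(A*, lower, raise)` is an `sl₂`-triple and `Aᵉ = i lower - i raise`. In an irreducible `T`-module
`W` with endpoint `r`, a nonzero vector of `E*_r W` is primitive of weight `D - 2r`; by `sl₂`
theory `D - 2r = d` is a natural number and `W` is spanned by the string `ψ_k = raiseᵏ v`,
`k ≤ d`, with `E*_{r+k} W = ℂ ψ_k`. The characters of `(ℤ/2)^D` diagonalize `A`, so `u ∈ E_r W`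
satisfies `A u = d u`; writing `E*_{r+k} u = β_k ψ_k` and comparing levels in `A u = d u` gives
`β_k = (k + 1) β_{k+1}`, and the action of `lower` and `raise` on the string then yields the
formula.
-/

attribute [local instance] LieRing.ofAssociativeRing

section Matrix

open Polynomial

variable {n R : Type*} [Fintype n] [DecidableEq n] [CommRing R]

lemma Matrix.aeval_mulVec (M : Matrix n n R) (p : R[X]) (v : n → R) :
    aeval M p *ᵥ v = aeval (toLinAlgEquiv' M) p v := by
  rw [aeval_algEquiv, AlgHom.comp_apply]
  rfl

lemma Matrix.aeval_mulVec_of_mulVec_eq_smul {M : Matrix n n R} {v : n → R} {c : R}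
    (h : M *ᵥ v = c • v) (p : R[X]) : aeval M p *ᵥ v = p.eval c • v := by
  rcases eq_or_ne v 0 with rfl | hv
  · simp
  rw [aeval_mulVec]
  exact Module.End.aeval_apply_of_hasEigenvector ⟨Module.End.mem_eigenspace_iff.mpr h, hv⟩

lemma Matrix.aeval_mulVec_mem {M : Matrix n n R} {W : Submodule R (n → R)}
    (h : ∀ w ∈ W, M *ᵥ w ∈ W) (p : R[X]) {w : n → R} (hw : w ∈ W) : aeval M p *ᵥ w ∈ W := by
  rw [aeval_mulVec]
  exact aeval_apply_smul_mem_of_le_comap hw p _ h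

lemma LieModule.toEnd_matrix_pow_apply (f : Matrix n n R) (k : ℕ) (v : n → R) :
    (LieModule.toEnd R (Matrix n n R) (n → R) f ^ k) v = (f ^ k) *ᵥ v := by
  induction k with
  | zero => simp
  | succ k ih => rw [pow_succ', Module.End.mul_apply, ih, pow_succ', ← mulVec_mulVec]; rfl

namespace IsSl2Triple.HasPrimitiveVectorWith

variable {h e f : Matrix n n R} {t : IsSl2Triple h e f} {v : n → R} {μ : R}

lemma h_mulVec_f_pow (P : t.HasPrimitiveVectorWith v μ) (k : ℕ) :
    h *ᵥ ((f ^ k) *ᵥ v) = (μ - 2 * k) • ((f ^ k) *ᵥ v) := by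
  have := P.lie_h_pow_toEnd_f k
  rwa [LieModule.toEnd_matrix_pow_apply, Matrix.lie_apply] at this

lemma e_mulVec_f_pow_succ (P : t.HasPrimitiveVectorWith v μ) (k : ℕ) :
    e *ᵥ ((f ^ (k + 1)) *ᵥ v) = ((k + 1) * (μ - k)) • ((f ^ k) *ᵥ v) := by
  have := P.lie_e_pow_succ_toEnd_f k
  rwa [LieModule.toEnd_matrix_pow_apply, LieModule.toEnd_matrix_pow_apply,
    Matrix.lie_apply] at this

lemma f_pow_mulVec_ne_zero [IsDomain R] [CharZero R] (P : t.HasPrimitiveVectorWith v μ) {m : ℕ}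
    (hm : μ = m) {k : ℕ} (hk : k ≤ m) : (f ^ k) *ᵥ v ≠ 0 := by
  rw [← LieModule.toEnd_matrix_pow_apply]
  exact P.pow_toEnd_f_ne_zero_of_eq_nat hm hk

lemma f_pow_succ_mulVec_eq_zero [IsDomain R] [CharZero R] [IsNoetherianRing R]
    (P : t.HasPrimitiveVectorWith v μ) {m : ℕ} (hm : μ = m) : (f ^ (m + 1)) *ᵥ v = 0 := by
  rw [← LieModule.toEnd_matrix_pow_apply]
  exact P.pow_toEnd_f_eq_zero_of_eq_nat hm

variable {d : ℕ} {β : ℕ → R}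

lemma e_mulVec_smul_f_pow_succ (P : t.HasPrimitiveVectorWith v (d : R))
    (hβ : ∀ k < d, β k = (k + 1) * β (k + 1)) {k : ℕ} (hk : k < d) :
    e *ᵥ (β (k + 1) • (f ^ (k + 1)) *ᵥ v) = ((d : R) - k) • (β k • (f ^ k) *ᵥ v) := by
  rw [mulVec_smul, P.e_mulVec_f_pow_succ, hβ k hk, smul_smul, smul_smul]
  ring_nf

lemma f_mulVec_smul_f_pow [IsDomain R] [CharZero R] [IsNoetherianRing R]
    (P : t.HasPrimitiveVectorWith v (d : R))
    (hβ : ∀ k < d, β k = (k + 1) * β (k + 1)) {k : ℕ} (hk : k ≤ d) :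
    f *ᵥ (β k • (f ^ k) *ᵥ v) =
      if k = d then 0 else ((k : R) + 1) • (β (k + 1) • (f ^ (k + 1)) *ᵥ v) := by
  rw [mulVec_smul, mulVec_mulVec, ← pow_succ']
  split_ifs with hkd
  · rw [hkd, P.f_pow_succ_mulVec_eq_zero rfl, smul_zero]
  · rw [hβ k (lt_of_le_of_ne hk hkd), smul_smul]

end IsSl2Triple.HasPrimitiveVectorWith

end Matrix

lemma eq_mul_succ_of_recurrence {d : ℕ} {β : ℕ → ℂ} (h0 : (d : ℂ) * β 0 = d * β 1)
    (hsucc : ∀ k, k + 1 ≤ d → (d : ℂ) * β (k + 1) = (k + 2) * (d - (k + 1)) * β (k + 2) + β k) :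
    ∀ k < d, β k = (k + 1) * β (k + 1) := by
  intro k hk
  induction k with
  | zero =>
    have hd : (d : ℂ) ≠ 0 := by exact_mod_cast hk.ne'
    simpa using mul_left_cancel₀ hd h0
  | succ k ih =>
    have hne : (d : ℂ) - (k + 1) ≠ 0 := sub_ne_zero.mpr (by exact_mod_cast hk.ne')
    have h := hsucc k hk.le
    rw [ih (by omega)] at h
    apply mul_left_cancel₀ hne
    push_cast
    linear_combination h

namespace Hypercube

open Function

variable {D : ℕ}

lemma wt_le (y : Vtx D) : wt y ≤ D :=
  (card_filter_le _ _).trans_eq (card_fin D)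

lemma wt_update_true {y : Vtx D} {k : Fin D} (hk : y k = false) :
    wt (update y k true) = wt y + 1 := by
  unfold wt
  rw [← card_insert_of_notMem (s := univ.filter fun m => y m = true) (a := k) (by simp [hk])]
  congr 1
  ext m
  by_cases hm : m = k <;> simp [hm, update_of_ne]

lemma wt_update_false {y : Vtx D} {k : Fin D} (hk : y k = true) :
    wt (update y k false) + 1 = wt y := by
  have := wt_update_true (y := update y k false) (k := k) (by simp)
  rwa [update_idem, update_eq_self_iff.mpr hk.symm, eq_comm] at this

lemma sum_ite_eq_false_eq_sub_wt (y : Vtx D) :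
    (∑ k, if y k = false then (1 : ℂ) else 0) = D - wt y := by
  rw [Finset.sum_boole, eq_sub_iff_add_eq, wt]
  norm_cast
  simpa using card_filter_add_card_filter_not (s := univ) (p := fun k : Fin D => y k = false)

-- The lowering and raising matrices `∑ E*_{i-1} A E*_i` and `∑ E*_{i+1} A E*_i`.
def lower (D : ℕ) : Matrix (Vtx D) (Vtx D) ℂ :=
  fun y z => ∑ k, if y k = false ∧ z = update y k true then 1 else 0

def raise (D : ℕ) : Matrix (Vtx D) (Vtx D) ℂ :=
  fun y z => ∑ k, if y k = true ∧ z = update y k false then 1 else 0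

lemma eq_update_not_iff {y z : Vtx D} {k : Fin D} :
    z = update y k (!y k) ↔ univ.filter (fun m => y m ≠ z m) = {k} := by
  constructor
  · rintro rfl
    ext m
    by_cases hm : m = k <;> simp [hm]
  · intro h
    funext m
    have hm : y m ≠ z m ↔ m = k := by simpa using congrArg (m ∈ ·) h
    by_cases hmk : m = k
    · subst hmk
      cases hy : y m <;> cases hz : z m <;> simp_all
    · rw [update_of_ne hmk]
      exact not_not.mp (mt hm.mp hmk) |>.symm

lemma adjMat_eq_lower_add_raise : adjMat D = lower D + raise D := by
  ext y z
  have hk : ∀ k, ((if y k = false ∧ z = update y k true then 1 else 0) +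
      (if y k = true ∧ z = update y k false then 1 else 0) : ℂ) =
      if univ.filter (fun m => y m ≠ z m) = {k} then 1 else 0 := by
    intro k
    simp_rw [← eq_update_not_iff]
    cases y k <;> simp
  rw [Matrix.add_apply, lower, raise, ← sum_add_distrib, sum_congr rfl fun k _ => hk k, adjMat]
  split_ifs with h
  · obtain ⟨k, hk⟩ := card_eq_one.mp h
    rw [sum_eq_single k ?_ (by simp), if_pos hk]
    exact fun m _ hm => if_neg fun h' => hm (singleton_inj.mp (h'.symm.trans hk))
  · refine (sum_eq_zero fun k _ => if_neg fun hk => h ?_).symm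
    rw [hk, card_singleton]

lemma lower_mulVec_apply (f : Vtx D → ℂ) (y : Vtx D) :
    (lower D *ᵥ f) y = ∑ k, if y k = false then f (update y k true) else 0 := by
  simp only [mulVec, dotProduct, lower, sum_mul, ite_mul, one_mul, zero_mul, ite_and]
  rw [sum_comm]
  simp

lemma raise_mulVec_apply (f : Vtx D → ℂ) (y : Vtx D) :
    (raise D *ᵥ f) y = ∑ k, if y k = true then f (update y k false) else 0 := by
  simp only [mulVec, dotProduct, raise, sum_mul, ite_mul, one_mul, zero_mul, ite_and]
  rw [sum_comm]
  simp

lemma raise_mulVec_update_true (f : Vtx D → ℂ) {y : Vtx D} {k : Fin D} (hk : y k = false) :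
    (raise D *ᵥ f) (update y k true) =
      f y + ∑ j, if y j = true then f (update (update y k true) j false) else 0 := by
  rw [raise_mulVec_apply, ← Fintype.sum_ite_eq' k fun _ => f y, ← sum_add_distrib]
  refine sum_congr rfl fun j _ => ?_
  by_cases hj : j = k
  · subst hj
    simp [hk, (update_eq_self_iff (f := y)).mpr hk.symm]
  · simp [hj]

lemma lower_mulVec_update_false (f : Vtx D → ℂ) {y : Vtx D} {j : Fin D} (hj : y j = true) :
    (lower D *ᵥ f) (update y j false) =
      f y + ∑ k, if y k = false then f (update (update y j false) k true) else 0 := by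
  rw [lower_mulVec_apply, ← Fintype.sum_ite_eq' j fun _ => f y, ← sum_add_distrib]
  refine sum_congr rfl fun k _ => ?_
  by_cases hk : k = j
  · subst hk
    simp [hj, (update_eq_self_iff (f := y)).mpr hj.symm]
  · simp [hk]

lemma lie_lower_raise : ⁅lower D, raise D⁆ = dualAdjMat D := by
  refine Matrix.ext_iff_mulVec.mpr fun f => funext fun y => ?_
  have hLR : (lower D *ᵥ (raise D *ᵥ f)) y = (D - wt y) * f y +
      ∑ k, ∑ j, if y k = false ∧ y j = true then
        f (update (update y k true) j false) else 0 := by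
    simp_rw [lower_mulVec_apply, ← sum_ite_eq_false_eq_sub_wt, sum_mul, ← sum_add_distrib]
    refine sum_congr rfl fun k _ => ?_
    split_ifs with hk
    · simp [raise_mulVec_update_true f hk, hk]
    · simp [hk]
  have hRL : (raise D *ᵥ (lower D *ᵥ f)) y = wt y * f y +
      ∑ k, ∑ j, if y k = false ∧ y j = true then
        f (update (update y k true) j false) else 0 := by
    rw [sum_comm, wt, card_filter, Nat.cast_sum, sum_mul, ← sum_add_distrib, raise_mulVec_apply]
    refine sum_congr rfl fun j _ => ?_
    split_ifs with hj
    · refine (lower_mulVec_update_false f hj).trans ?_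
      simp only [Nat.cast_one, one_mul, hj, and_true]
      congr 1
      refine sum_congr rfl fun k _ => ?_
      split_ifs with hk
      · rw [update_comm fun hkj => by simp_all]
      · rfl
    · simp [hj]
  rw [Ring.lie_def, sub_mulVec, ← mulVec_mulVec, ← mulVec_mulVec, Pi.sub_apply, hLR, hRL,
    dualAdjMat, mulVec_diagonal]
  ring

lemma lower_apply_mul_wt (φ : ℕ → ℂ) (y z : Vtx D) :
    lower D y z * φ (wt z) = lower D y z * φ (wt y + 1) := by
  simp only [lower, sum_mul]
  refine sum_congr rfl fun k _ => ?_
  split_ifs with h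
  · rw [h.2, wt_update_true h.1]
  · simp

lemma raise_apply_mul_wt (φ : ℕ → ℂ) (y z : Vtx D) :
    raise D y z * φ (wt y) = raise D y z * φ (wt z + 1) := by
  simp only [raise, sum_mul]
  refine sum_congr rfl fun k _ => ?_
  split_ifs with h
  · rw [h.2, wt_update_false h.1]
  · simp

lemma lie_dualAdjMat_lower : ⁅dualAdjMat D, lower D⁆ = 2 • lower D := by
  ext y z
  have := lower_apply_mul_wt (fun n => (n : ℂ)) y z
  simp only [Ring.lie_def, dualAdjMat, Matrix.sub_apply, diagonal_mul, mul_diagonal,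
    Matrix.smul_apply]
  push_cast at this
  linear_combination 2 * this

lemma lie_dualAdjMat_raise : ⁅dualAdjMat D, raise D⁆ = -(2 • raise D) := by
  ext y z
  have := raise_apply_mul_wt (fun n => (n : ℂ)) y z
  simp only [Ring.lie_def, dualAdjMat, Matrix.sub_apply, diagonal_mul, mul_diagonal,
    Matrix.smul_apply, Matrix.neg_apply]
  push_cast at this
  linear_combination -2 * this

lemma isSl2Triple (hD : 0 < D) : IsSl2Triple (dualAdjMat D) (lower D) (raise D) where
  h_ne_zero h := by
    have := congrFun (congrFun h fun _ => false) fun _ => false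
    simp [dualAdjMat, wt] at this
    omega
  lie_e_f := lie_lower_raise
  lie_h_e_nsmul := lie_dualAdjMat_lower
  lie_h_f_nsmul := lie_dualAdjMat_raise

lemma lie_adjMat_dualAdjMat :
    ⁅adjMat D, dualAdjMat D⁆ = 2 • raise D - 2 • lower D := by
  rw [adjMat_eq_lower_add_raise, add_lie, ← lie_skew, lie_dualAdjMat_lower, ← lie_skew (raise D),
    lie_dualAdjMat_raise]
  abel

lemma imagAdjMat_eq : imagAdjMat D = Complex.I • lower D - Complex.I • raise D := by
  rw [imagAdjMat, ← Ring.lie_def, lie_adjMat_dualAdjMat]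
  module

lemma lower_eq : lower D = (2⁻¹ : ℂ) • adjMat D - (4⁻¹ : ℂ) • ⁅adjMat D, dualAdjMat D⁆ := by
  rw [lie_adjMat_dualAdjMat, adjMat_eq_lower_add_raise]
  module

lemma raise_eq : raise D = (2⁻¹ : ℂ) • adjMat D + (4⁻¹ : ℂ) • ⁅adjMat D, dualAdjMat D⁆ := by
  rw [lie_adjMat_dualAdjMat, adjMat_eq_lower_add_raise]
  module

lemma EstarMat_mul_lower (i : ℕ) : EstarMat D i * lower D = lower D * EstarMat D (i + 1) := by
  ext y z
  have := lower_apply_mul_wt (fun n => if n = i + 1 then 1 else 0) y z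
  simp only [EstarMat, diagonal_mul, mul_diagonal, add_left_inj] at this ⊢
  rw [this, mul_comm]

lemma lower_mul_EstarMat_zero : lower D * EstarMat D 0 = 0 := by
  ext y z
  have := lower_apply_mul_wt (fun n => if n = 0 then 1 else 0) y z
  simpa [EstarMat, mul_diagonal] using this

lemma EstarMat_succ_mul_raise (i : ℕ) :
    EstarMat D (i + 1) * raise D = raise D * EstarMat D i := by
  ext y z
  have := raise_apply_mul_wt (fun n => if n = i + 1 then 1 else 0) y z
  simp only [EstarMat, diagonal_mul, mul_diagonal, add_left_inj] at this ⊢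
  rw [mul_comm, this]

lemma EstarMat_zero_mul_raise : EstarMat D 0 * raise D = 0 := by
  ext y z
  have := raise_apply_mul_wt (fun n => if n = 0 then 1 else 0) y z
  simpa [EstarMat, diagonal_mul, mul_comm] using this

lemma dualAdjMat_mul_EstarMat (i : ℕ) :
    dualAdjMat D * EstarMat D i = ((D : ℂ) - 2 * i) • EstarMat D i := by
  ext y z
  simp only [dualAdjMat, EstarMat, diagonal_mul_diagonal, Matrix.smul_apply, diagonal_apply,
    smul_eq_mul]
  split_ifs <;> simp_all

lemma EstarMat_mulVec_of_dualAdjMat_mulVec {v : Vtx D → ℂ} {i : ℕ}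
    (hv : dualAdjMat D *ᵥ v = ((D : ℂ) - 2 * i) • v) (k : ℕ) :
    EstarMat D k *ᵥ v = if i = k then v else 0 := by
  funext y
  have hy := congrFun hv y
  simp only [dualAdjMat, mulVec_diagonal, Pi.smul_apply, smul_eq_mul] at hy
  have : wt y = i ∨ v y = 0 := by
    rcases mul_eq_mul_right_iff.mp hy with h | h
    · left; exact_mod_cast (by linear_combination -h / 2 : (wt y : ℂ) = i)
    · exact Or.inr h
  rw [EstarMat, mulVec_diagonal]
  split_ifs with h1 h2 h2 <;> rcases this with h | h <;> simp_all

section Spectral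

open Polynomial

lemma theta_injective : Function.Injective (theta D) := by
  intro i j h
  simpa [theta] using h

-- Its columns are the characters of `(ℤ/2)^D`, a basis of eigenvectors of `A`.
def hadamard (D : ℕ) : Matrix (Vtx D) (Vtx D) ℂ :=
  fun y s => ∏ k, if y k && s k then -1 else 1

lemma hadamard_update_not (y s : Vtx D) (k : Fin D) :
    hadamard D (update y k (!y k)) s = hadamard D y s * if s k then -1 else 1 := by
  simp only [hadamard]
  rw [← mul_prod_erase _ _ (mem_univ k), ← mul_prod_erase _ _ (mem_univ k), update_self,
    prod_congr rfl fun m hm => by rw [update_of_ne (ne_of_mem_erase hm)]]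
  cases y k <;> cases s k <;> simp [mul_comm]

lemma sum_ite_neg_one_one_eq_theta (s : Vtx D) :
    (∑ k, if s k then (-1 : ℂ) else 1) = theta D (wt s) := by
  have h : ∀ k, (if s k then (-1 : ℂ) else 1) = 1 - 2 * if s k then 1 else 0 := by
    intro k
    cases s k <;> norm_num
  rw [sum_congr rfl fun k _ => h k, sum_sub_distrib, ← mul_sum, sum_boole]
  simp [wt, theta]

lemma adjMat_mulVec_hadamard (s : Vtx D) :
    adjMat D *ᵥ (hadamard D)ᵀ s = theta D (wt s) • (hadamard D)ᵀ s := by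
  funext y
  have hk : ∀ k, ((if y k = false then hadamard D (update y k true) s else 0) +
      if y k = true then hadamard D (update y k false) s else 0) =
      hadamard D y s * if s k then -1 else 1 := by
    intro k
    rw [← hadamard_update_not]
    cases y k <;> simp
  simp only [adjMat_eq_lower_add_raise, add_mulVec, Pi.add_apply, lower_mulVec_apply,
    raise_mulVec_apply, transpose_apply, ← sum_add_distrib, hk, ← mul_sum,
    sum_ite_neg_one_one_eq_theta, Pi.smul_apply, smul_eq_mul, mul_comm]

lemma hadamard_mul_hadamard : hadamard D * hadamard D = (2 ^ D : ℂ) • 1 := by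
  ext y z
  have hk : ∀ k, (∑ b : Bool, (if y k && b then (-1 : ℂ) else 1) * if b && z k then -1 else 1) =
      if y k = z k then 2 else 0 := by
    intro k
    cases y k <;> cases z k <;> norm_num
  simp only [mul_apply, hadamard, ← prod_mul_distrib]
  rw [← Fintype.prod_sum fun k b => (if y k && b then (-1 : ℂ) else 1) * if b && z k then -1 else 1,
    prod_congr rfl fun k _ => hk k, Matrix.smul_apply, one_apply]
  split_ifs with hyz
  · simp [hyz]
  · obtain ⟨k, hk⟩ := Function.ne_iff.mp hyz
    rw [prod_eq_zero (mem_univ k) (if_neg hk), smul_zero]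

lemma aeval_adjMat_nodal : aeval (adjMat D) (Lagrange.nodal (range (D + 1)) (theta D)) = 0 := by
  have hH : aeval (adjMat D) (Lagrange.nodal (range (D + 1)) (theta D)) * hadamard D = 0 := by
    ext y s
    change (aeval (adjMat D) _ *ᵥ (hadamard D)ᵀ s) y = 0
    rw [aeval_mulVec_of_mulVec_eq_smul (adjMat_mulVec_hadamard s),
      Lagrange.eval_nodal_at_node (mem_range_succ_iff.mpr (wt_le s)), zero_smul]
    rfl
  have := congrArg (· * hadamard D) hH
  simp only [mul_assoc, hadamard_mul_hadamard, zero_mul, mul_smul_comm, mul_one] at this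
  exact (smul_eq_zero.mp this).resolve_left (by simp)

lemma adjMat_mul_Emat {i : ℕ} (hi : i ≤ D) : adjMat D * Emat D i = theta D i • Emat D i := by
  have hi' : i ∈ range (D + 1) := mem_range_succ_iff.mpr hi
  have key : (X - C (theta D i)) * Lagrange.basis (range (D + 1)) (theta D) i =
      C (Lagrange.nodalWeight (range (D + 1)) (theta D) i) *
        Lagrange.nodal (range (D + 1)) (theta D) := by
    rw [Lagrange.basis_eq_prod_sub_inv_mul_nodal_div hi', ← Lagrange.nodal_erase_eq_nodal_div hi',
      Lagrange.nodal_eq_mul_nodal_erase hi']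
    ring
  have := congrArg (aeval (adjMat D)) key
  rw [map_mul, map_mul, aeval_adjMat_nodal, mul_zero, map_sub, aeval_X, aeval_C,
    Algebra.algebraMap_eq_smul_one, sub_mul, smul_one_mul, sub_eq_zero] at this
  exact this

lemma EstarMat_eq_aeval (i : ℕ) :
    EstarMat D i = aeval (dualAdjMat D) (Lagrange.basis (range (D + 1)) (theta D) i) := by
  refine ext_of_mulVec_single fun y => ?_
  have hy : dualAdjMat D *ᵥ Pi.single y 1 = theta D (wt y) • Pi.single y 1 := by
    rw [dualAdjMat, diagonal_mulVec_single, ← Pi.single_smul, smul_eq_mul, theta]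
  rw [aeval_mulVec_of_mulVec_eq_smul hy, EstarMat, diagonal_mulVec_single]
  have hwt : wt y ∈ range (D + 1) := mem_range_succ_iff.mpr (wt_le y)
  by_cases h : wt y = i
  · subst h
    rw [Lagrange.eval_basis_self theta_injective.injOn hwt]
    simp
  · rw [Lagrange.eval_basis_of_ne (Ne.symm h) hwt]
    simp [h]

end Spectral

end Hypercube

namespace IsTMod

open Hypercube

variable {D : ℕ} {W : Submodule ℂ (Vtx D → ℂ)} {w : Vtx D → ℂ}

lemma lie_adjMat_dualAdjMat_mulVec_mem (hW : IsTMod D W) (hw : w ∈ W) :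
    ⁅adjMat D, dualAdjMat D⁆ *ᵥ w ∈ W := by
  rw [Ring.lie_def, sub_mulVec, ← mulVec_mulVec, ← mulVec_mulVec]
  exact sub_mem (hW.1 _ (hW.2 w hw)) (hW.2 _ (hW.1 w hw))

lemma lower_mulVec_mem (hW : IsTMod D W) (hw : w ∈ W) : lower D *ᵥ w ∈ W := by
  rw [lower_eq, sub_mulVec, smul_mulVec, smul_mulVec]
  exact sub_mem (W.smul_mem _ (hW.1 w hw)) (W.smul_mem _ (lie_adjMat_dualAdjMat_mulVec_mem hW hw))

lemma raise_mulVec_mem (hW : IsTMod D W) (hw : w ∈ W) : raise D *ᵥ w ∈ W := by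
  rw [raise_eq, add_mulVec, smul_mulVec, smul_mulVec]
  exact add_mem (W.smul_mem _ (hW.1 w hw)) (W.smul_mem _ (lie_adjMat_dualAdjMat_mulVec_mem hW hw))

lemma EstarMat_mulVec_mem (hW : IsTMod D W) (i : ℕ) (hw : w ∈ W) :
    EstarMat D i *ᵥ w ∈ W := by
  rw [EstarMat_eq_aeval]
  exact aeval_mulVec_mem hW.2 _ hw

lemma Emat_mulVec_mem (hW : IsTMod D W) (i : ℕ) (hw : w ∈ W) : Emat D i *ᵥ w ∈ W :=
  aeval_mulVec_mem hW.1 _ hw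

end IsTMod

namespace Hypercube

open Submodule

variable {D : ℕ} {W : Submodule ℂ (Vtx D → ℂ)} {r : ℕ}

lemma EstarMat_mulVec_eq_zero_of_lt
    (hr : IsLeast {i | Submodule.map (EstarMat D i).mulVecLin W ≠ ⊥} r) {x : Vtx D → ℂ}
    (hx : x ∈ W) {i : ℕ} (hi : i < r) : EstarMat D i *ᵥ x = 0 := by
  by_contra hne
  refine (hr.2 fun hbot => hne ?_).not_gt hi
  simpa [hbot] using mem_map_of_mem (f := (EstarMat D i).mulVecLin) hx

lemma EstarMat_mulVec_raise_mulVec_eq_zero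
    (hr : IsLeast {i | Submodule.map (EstarMat D i).mulVecLin W ≠ ⊥} r) {x : Vtx D → ℂ}
    (hx : x ∈ W) : EstarMat D r *ᵥ (raise D *ᵥ x) = 0 := by
  rw [mulVec_mulVec]
  rcases r with _ | s
  · rw [EstarMat_zero_mul_raise, zero_mulVec]
  · rw [EstarMat_succ_mul_raise, ← mulVec_mulVec,
      EstarMat_mulVec_eq_zero_of_lt hr hx (Nat.lt_succ_self s), mulVec_zero]

lemma exists_hasPrimitiveVectorWith (hD : 0 < D) (hW : IsTMod D W)
    (hr : IsLeast {i | Submodule.map (EstarMat D i).mulVecLin W ≠ ⊥} r) :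
    ∃ v ∈ W, (isSl2Triple hD).HasPrimitiveVectorWith v ((D : ℂ) - 2 * r) := by
  obtain ⟨_, ⟨w, hw, rfl⟩, hw0⟩ := (Submodule.ne_bot_iff _).mp hr.1
  refine ⟨_, hW.EstarMat_mulVec_mem r hw, hw0, ?_, ?_⟩
  · rw [Matrix.lie_apply, mulVec_mulVec, dualAdjMat_mul_EstarMat, smul_mulVec]
  · rw [Matrix.lie_apply, mulVec_mulVec]
    rcases r with _ | s
    · rw [lower_mul_EstarMat_zero, zero_mulVec]
    · rw [← EstarMat_mul_lower, ← mulVec_mulVec,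
        EstarMat_mulVec_eq_zero_of_lt hr (hW.lower_mulVec_mem hw) (Nat.lt_succ_self s)]

lemma raise_pow_mulVec_mem (hW : IsTMod D W) {v : Vtx D → ℂ} (hv : v ∈ W) (k : ℕ) :
    (raise D ^ k) *ᵥ v ∈ W := by
  induction k with
  | zero => simpa using hv
  | succ k ih => rw [pow_succ', ← mulVec_mulVec]; exact hW.raise_mulVec_mem ih

lemma span_raise_pow_mulVec_eq {t : IsSl2Triple (dualAdjMat D) (lower D) (raise D)}
    (hW : IsIrredTMod D W) {v : Vtx D → ℂ} {μ : ℂ}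
    (P : t.HasPrimitiveVectorWith v μ) (hv : v ∈ W) :
    span ℂ (Set.range fun k => (raise D ^ k) *ᵥ v) = W := by
  set S := span ℂ (Set.range fun k => (raise D ^ k) *ᵥ v)
  have hψ : ∀ k, (raise D ^ k) *ᵥ v ∈ S := fun k => subset_span ⟨k, rfl⟩
  have hstable : ∀ M : Matrix (Vtx D) (Vtx D) ℂ, (∀ k, M *ᵥ ((raise D ^ k) *ᵥ v) ∈ S) →
      ∀ w ∈ S, M *ᵥ w ∈ S := fun M hM =>
    span_le (p := S.comap M.mulVecLin).mpr (by rintro _ ⟨k, rfl⟩; exact hM k)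
  have hraise : ∀ k, raise D *ᵥ ((raise D ^ k) *ᵥ v) ∈ S := fun k => by
    rw [mulVec_mulVec, ← pow_succ']
    exact hψ (k + 1)
  have hlower : ∀ k, lower D *ᵥ ((raise D ^ k) *ᵥ v) ∈ S := by
    rintro (_ | k)
    · rw [pow_zero, one_mulVec, show lower D *ᵥ v = 0 from P.lie_e]
      exact S.zero_mem
    · rw [P.e_mulVec_f_pow_succ]
      exact S.smul_mem _ (hψ k)
  have hT : IsTMod D S := by
    refine ⟨hstable _ fun k => ?_, hstable _ fun k => ?_⟩
    · rw [adjMat_eq_lower_add_raise, add_mulVec]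
      exact add_mem (hlower k) (hraise k)
    · rw [P.h_mulVec_f_pow]
      exact S.smul_mem _ (hψ k)
  refine (hW.2.2 S hT (span_le.mpr ?_)).resolve_left fun hbot => P.ne_zero ?_
  · rintro _ ⟨k, rfl⟩
    exact raise_pow_mulVec_mem hW.1 hv k
  · simpa [hbot] using hψ 0

lemma EstarMat_mulVec_mem_span_singleton {t : IsSl2Triple (dualAdjMat D) (lower D) (raise D)}
    (hW : IsIrredTMod D W) {v : Vtx D → ℂ}
    (P : t.HasPrimitiveVectorWith v ((D : ℂ) - 2 * r)) (hv : v ∈ W)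
    {x : Vtx D → ℂ} (hx : x ∈ W) (k : ℕ) :
    EstarMat D (r + k) *ᵥ x ∈ ℂ ∙ ((raise D ^ k) *ᵥ v) := by
  rw [← span_raise_pow_mulVec_eq hW P hv] at hx
  refine span_le (p := (ℂ ∙ ((raise D ^ k) *ᵥ v)).comap (EstarMat D (r + k)).mulVecLin).mpr ?_ hx
  rintro _ ⟨j, rfl⟩
  have hj : dualAdjMat D *ᵥ ((raise D ^ j) *ᵥ v) =
      ((D : ℂ) - 2 * (r + j : ℕ)) • ((raise D ^ j) *ᵥ v) := by
    rw [P.h_mulVec_f_pow]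
    push_cast
    ring_nf
  simp only [SetLike.mem_coe, mem_comap, mulVecLin_apply,
    EstarMat_mulVec_of_dualAdjMat_mulVec hj, add_right_inj]
  split_ifs with hjk
  · exact hjk ▸ mem_span_singleton_self _
  · exact zero_mem _

lemma exists_EstarMat_mulVec_eq_smul_raise_pow {t : IsSl2Triple (dualAdjMat D) (lower D) (raise D)}
    (hW : IsIrredTMod D W) (hr : IsLeast {i | Submodule.map (EstarMat D i).mulVecLin W ≠ ⊥} r)
    {v : Vtx D → ℂ} {d : ℕ} (P : t.HasPrimitiveVectorWith v (d : ℂ)) (hv : v ∈ W)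
    (hdr : (D : ℂ) - 2 * r = d) {u : Vtx D → ℂ} (hu : u ∈ W)
    (hAu : adjMat D *ᵥ u = (d : ℂ) • u) :
    ∃ β : ℕ → ℂ, (∀ k, EstarMat D (r + k) *ᵥ u = β k • ((raise D ^ k) *ᵥ v)) ∧
      ∀ k < d, β k = (k + 1) * β (k + 1) := by
  choose β hβ using fun k =>
    mem_span_singleton.mp (EstarMat_mulVec_mem_span_singleton hW (hdr ▸ P) hv hu k)
  simp_rw [eq_comm (a := β _ • _)] at hβ
  have hlevel : ∀ k, ((d : ℂ) * β k) • ((raise D ^ k) *ᵥ v) =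
      (β (k + 1) * ((k + 1) * (d - k))) • ((raise D ^ k) *ᵥ v) +
        EstarMat D (r + k) *ᵥ (raise D *ᵥ u) := by
    intro k
    rw [← smul_smul, ← hβ, ← mulVec_smul, ← hAu, adjMat_eq_lower_add_raise, add_mulVec,
      mulVec_add, mulVec_mulVec, EstarMat_mul_lower, ← mulVec_mulVec,
      show r + k + 1 = r + (k + 1) from rfl, hβ, mulVec_smul, P.e_mulVec_f_pow_succ, smul_smul]
  have hψ : ∀ k ≤ d, (raise D ^ k) *ᵥ v ≠ 0 := fun k hk => P.f_pow_mulVec_ne_zero rfl hk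
  refine ⟨β, hβ, eq_mul_succ_of_recurrence ?_ fun k hk => ?_⟩
  · have h := hlevel 0
    rw [add_zero, EstarMat_mulVec_raise_mulVec_eq_zero hr hu, add_zero] at h
    have := smul_left_injective ℂ (hψ 0 d.zero_le) h
    simp only [CharP.cast_eq_zero, zero_add, sub_zero, one_mul] at this
    linear_combination this
  · have h := hlevel (k + 1)
    rw [show r + (k + 1) = r + k + 1 from rfl, mulVec_mulVec, EstarMat_succ_mul_raise,
      ← mulVec_mulVec, hβ, mulVec_smul, mulVec_mulVec, ← pow_succ', ← add_smul] at h
    have := smul_left_injective ℂ (hψ (k + 1) hk) h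
    push_cast at this
    linear_combination this

lemma imagAdjMat_mulVec_EstarMat {t : IsSl2Triple (dualAdjMat D) (lower D) (raise D)}
    {v : Vtx D → ℂ} {d : ℕ} (P : t.HasPrimitiveVectorWith v (d : ℂ)) {u : Vtx D → ℂ}
    {β : ℕ → ℂ} (hβ : ∀ k, EstarMat D (r + k) *ᵥ u = β k • ((raise D ^ k) *ᵥ v))
    (hrec : ∀ k < d, β k = (k + 1) * β (k + 1)) {j : ℕ} (hj : j ≤ d) :
    imagAdjMat D *ᵥ (EstarMat D (r + j) *ᵥ u) =
      (if j = 0 then 0 else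
        (Complex.I * ((d : ℂ) - (j : ℂ) + 1)) • (EstarMat D (r + j - 1) *ᵥ u))
      + (if j = d then 0 else
        (-(Complex.I * ((j : ℂ) + 1))) • (EstarMat D (r + j + 1) *ᵥ u)) := by
  have hL : lower D *ᵥ (EstarMat D (r + j) *ᵥ u) =
      if j = 0 then 0 else ((d : ℂ) - j + 1) • EstarMat D (r + j - 1) *ᵥ u := by
    rcases j with _ | k
    · rw [hβ, pow_zero, one_mulVec, mulVec_smul, show lower D *ᵥ v = 0 from P.lie_e, smul_zero,
        if_pos rfl]
    · rw [hβ, P.e_mulVec_smul_f_pow_succ hrec hj, ← hβ, if_neg k.succ_ne_zero,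
        show r + (k + 1) - 1 = r + k by omega]
      push_cast
      ring_nf
  have hR : raise D *ᵥ (EstarMat D (r + j) *ᵥ u) =
      if j = d then 0 else ((j : ℂ) + 1) • EstarMat D (r + j + 1) *ᵥ u := by
    rw [hβ, P.f_mulVec_smul_f_pow hrec hj, ← hβ]
    rfl
  rw [imagAdjMat_eq, sub_mulVec, smul_mulVec, smul_mulVec, hL, hR]
  split_ifs <;> module

end Hypercube

open Hypercube in
theorem imagAdjMat_action_on_Estar_basis_general (D : ℕ) (hD : 0 < D)
    (W : Submodule ℂ (Vtx D → ℂ)) (hW : IsIrredTMod D W) (r : ℕ)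
    (hr : IsLeast {i | Submodule.map (EstarMat D i).mulVecLin W ≠ ⊥} r)
    (d : ℕ) (hd : d = D - 2 * r)
    (u : Vtx D → ℂ) (hu : u ∈ Submodule.map (Emat D r).mulVecLin W)
    (j : ℕ) (hj : j ≤ d) :
    (imagAdjMat D).mulVec ((EstarMat D (r + j)).mulVec u) =
      (if j = 0 then 0 else
        (Complex.I * ((d : ℂ) - (j : ℂ) + 1)) • (EstarMat D (r + j - 1)).mulVec u)
      + (if j = d then 0 else
        (-(Complex.I * ((j : ℂ) + 1))) • (EstarMat D (r + j + 1)).mulVec u) := by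
  obtain ⟨v, hv, P⟩ := exists_hasPrimitiveVectorWith hD hW.1 hr
  obtain ⟨m, hm⟩ := P.exists_nat
  have hDm : D = m + 2 * r := by exact_mod_cast (by linear_combination hm : (D : ℂ) = m + 2 * r)
  have hdr : (D : ℂ) - 2 * r = d := by rw [hm, hd, hDm, Nat.add_sub_cancel]
  rw [hdr] at P
  obtain ⟨w, hw, rfl⟩ := hu
  rw [mulVecLin_apply]
  have hAu : adjMat D *ᵥ (Emat D r *ᵥ w) = (d : ℂ) • (Emat D r *ᵥ w) := by
    rw [mulVec_mulVec, adjMat_mul_Emat (by omega), smul_mulVec, theta, hdr]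
  obtain ⟨β, hβ, hrec⟩ :=
    exists_EstarMat_mulVec_eq_smul_raise_pow hW hr P hv hdr (hW.1.Emat_mulVec_mem r hw) hAu
  exact imagAdjMat_mulVec_EstarMat P hβ hrec hj

/-- `Aᵉ` acts on the basis `E*_r u, ..., E*_{r+d} u` by
`Aᵉ(E*_{r+j} u) = i(d-j+1)·E*_{r+j-1} u - i(j+1)·E*_{r+j+1} u` (terms with index `r-1` or
`r+d+1` interpreted as `0`). -/
theorem imagAdjMat_action_on_Estar_basis (D : ℕ) (hD : 0 < D)
    (W : Submodule ℂ (Vtx D → ℂ)) (hW : IsIrredTMod D W) (r : ℕ)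
    (hr : IsLeast {i | Submodule.map (EstarMat D i).mulVecLin W ≠ ⊥} r)
    (d : ℕ) (hd : d = D - 2 * r)
    (u : Vtx D → ℂ) (hu : u ∈ Submodule.map (Emat D r).mulVecLin W) (hu0 : u ≠ 0)
    (j : ℕ) (hj : j ≤ d) :
    (imagAdjMat D).mulVec ((EstarMat D (r + j)).mulVec u) =
      (if j = 0 then 0 else
        (Complex.I * ((d : ℂ) - (j : ℂ) + 1)) • (EstarMat D (r + j - 1)).mulVec u)
      + (if j = d then 0 else
        (-(Complex.I * ((j : ℂ) + 1))) • (EstarMat D (r + j + 1)).mulVec u) :=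
  imagAdjMat_action_on_Estar_basis_general D hD W hW r hr d hd u hu j hj
end
end
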